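/- Let n ≥ 7 and t ≥ 3 be integers with 2^t − 1 ≤ n < 2^{t+1} − 1, and set d = max{2^{t−1} − 2, n − 2^t − 1}. Then w₃^d ∉ I_n and w₃^{d+1} ∈ I_n. (Equivalently, the height of the Stiefel–Whitney class w̃₃ in H^*(G̃_{n,3}; ℤ/2) equals d.) -/

import Mathlib

open MvPolynomial Finset

noncomputable section

/-- `R2 = (ℤ/2)[w₂, w₃]`, the polynomial ring in two variables over `ℤ/2ℤ`. -/
abbrev R2 : Type := MvPolynomial (Fin 2) (ZMod 2)

/-- The variable `w₂`. -/
def w2 : R2 := X 0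

/-- The variable `w₃`. -/
def w3 : R2 := X 1

/-- The polynomials `g_r`: `g₀ = 1`, `g₁ = 0`, `g₂ = w₂`,
`g_{r+3} = w₂ g_{r+1} + w₃ g_r`. -/
def g : ℕ → R2
  | 0 => 1
  | 1 => 0
  | 2 => w2
  | (r+3) => w2 * g (r+1) + w3 * g r

/-- The ideal `I_n = (g_{n-2}, g_{n-1}, g_n)`. -/
def I (n : ℕ) : Ideal R2 := Ideal.span {g (n-2), g (n-1), g n}

lemma g_rec (r : ℕ) : g (r+3) = w2 * g (r+1) + w3 * g r := rfl

lemma two_eq_zero' : (2 : R2) = 0 := by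
  have h := CharP.cast_eq_zero R2 2
  simpa using h

lemma add_self' (p : R2) : p + p = 0 := by
  have h : p + p = 2 * p := by ring
  rw [h, two_eq_zero', zero_mul]

lemma sq_add' (p q : R2) : (p + q)^2 = p^2 + q^2 := by
  linear_combination add_self' (p*q)

lemma mem_I_n2 (n : ℕ) : g (n-2) ∈ I n := Ideal.subset_span (by simp)
lemma mem_I_n1 (n : ℕ) : g (n-1) ∈ I n := Ideal.subset_span (by simp)
lemma mem_I_n (n : ℕ) : g n ∈ I n := Ideal.subset_span (by simp)

lemma g_top (n : ℕ) (hn : 2 ≤ n) : ∀ m, n - 2 ≤ m → g m ∈ I n := by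
  intro m
  induction m using Nat.strong_induction_on with
  | _ m ih =>
    intro hm
    by_cases e2 : m = n - 2
    · rw [e2]; exact mem_I_n2 n
    by_cases e1 : m = n - 1
    · rw [e1]; exact mem_I_n1 n
    by_cases e0 : m = n
    · rw [e0]; exact mem_I_n n
    obtain ⟨r, rfl⟩ : ∃ r, m = r + 3 := ⟨m - 3, by omega⟩
    rw [g_rec]
    exact Ideal.add_mem _ (Ideal.mul_mem_left _ _ (ih (r+1) (by omega) (by omega)))
      (Ideal.mul_mem_left _ _ (ih r (by omega) (by omega)))

lemma w3_pow_g_mem (n : ℕ) (hn : 2 ≤ n) : ∀ k j, n - 2 ≤ j + k → w3 ^ k * g j ∈ I n := by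
  intro k
  induction k using Nat.strong_induction_on with
  | _ k ih =>
    intro j hj
    rcases le_or_gt (n-2) j with h | h
    · exact Ideal.mul_mem_left _ _ (g_top n hn j h)
    · obtain ⟨k', rfl⟩ : ∃ k', k = k' + 1 := ⟨k - 1, by omega⟩
      have key : w3 ^ (k'+1) * g j = w3 ^ k' * g (j+3) + w2 * (w3 ^ k' * g (j+1)) := by
        rw [g_rec j]
        linear_combination (-1 : R2) * add_self' (w2 * (w3^k' * g (j+1)))
      rw [key]
      exact Ideal.add_mem _ (ih k' (by omega) (j+3) (by omega))
        (Ideal.mul_mem_left _ _ (ih k' (by omega) (j+1) (by omega)))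

lemma gEO : ∀ r, (g (2*r+2) = (g (r+1))^2 + w2 * (g r)^2) ∧ (g (2*r+3) = w3 * (g r)^2) := by
  intro r
  induction r using Nat.strong_induction_on with
  | _ r ih =>
    match r with
    | 0 =>
      constructor
      · show g 2 = (g 1)^2 + w2 * (g 0)^2
        show w2 = (0:R2)^2 + w2 * 1^2
        ring
      · show g 3 = w3 * (g 0)^2
        rw [show (3:ℕ) = 0 + 3 from rfl, g_rec]
        show w2 * 0 + w3 * 1 = w3 * 1^2
        ring
    | 1 =>
      constructor
      · show g 4 = (g 2)^2 + w2 * (g 1)^2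
        rw [show (4:ℕ) = 1 + 3 from rfl, g_rec]
        show w2 * g 2 + w3 * 0 = (g 2)^2 + w2 * 0^2
        show w2 * w2 + w3 * 0 = w2^2 + w2 * 0^2
        ring
      · show g 5 = w3 * (g 1)^2
        rw [show (5:ℕ) = 2 + 3 from rfl, g_rec]
        show w2 * g 3 + w3 * g 2 = w3 * 0^2
        rw [show (3:ℕ) = 0 + 3 from rfl, g_rec]
        show w2 * (w2 * 0 + w3 * 1) + w3 * w2 = w3 * 0^2
        linear_combination add_self' (w2 * w3)
    | (r'+2) =>
      obtain ⟨ih1E, ih1O⟩ := ih (r'+1) (by omega)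
      obtain ⟨ihE, ihO⟩ := ih r' (by omega)
      constructor
      · rw [show 2*(r'+2)+2 = (2*r'+3)+3 by ring, g_rec,
            show 2*r'+3+1 = 2*(r'+1)+2 by ring, ih1E, ihO,
            show r'+2+1 = r'+3 by ring, g_rec]
        linear_combination (-1 : R2) * add_self' (w2 * g (r'+1) * (w3 * g r'))
      · rw [show 2*(r'+2)+3 = (2*(r'+1)+2)+3 by ring, g_rec,
            show 2*(r'+1)+2+1 = 2*(r'+1)+3 by ring, ih1O, ih1E]
        linear_combination add_self' (w2 * w3 * (g (r'+1))^2)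

lemma gO (r : ℕ) : g (2*r+3) = w3 * (g r)^2 := (gEO r).2

lemma g_special : ∀ s, g (3*2^s - 3) = w3 ^ (2^s - 1) := by
  intro s
  induction s with
  | zero => show g 0 = w3 ^ 0; rfl
  | succ s ih =>
    have h1 : 1 ≤ 2^s := Nat.one_le_two_pow
    rw [show 3*2^(s+1) - 3 = 2*(3*2^s - 3)+3 by rw [pow_succ]; omega, gO, ih,
        ← pow_mul, ← pow_succ']
    congr 1
    rw [pow_succ]
    omega

-- membership conclusion
lemma membership (n t : ℕ) (hn : 7 ≤ n) (ht : 3 ≤ t)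
    (h1 : 2 ^ t - 1 ≤ n) (h2 : n < 2 ^ (t + 1) - 1) :
    w3 ^ (max (2 ^ (t - 1) - 2) (n - 2 ^ t - 1) + 1) ∈ I n := by
  set D := max (2 ^ (t - 1) - 2) (n - 2 ^ t - 1) with hD
  have hq : (2:ℕ)^(t-1) ≥ 4 := by
    calc (2:ℕ)^(t-1) ≥ 2^2 := Nat.pow_le_pow_right (by norm_num) (by omega)
    _ = 4 := by norm_num
  have hqt : (2:ℕ)^t = 2 * 2^(t-1) := by
    rw [← pow_succ']
    congr 1
    omega
  have hqt1 : (2:ℕ)^(t+1) = 4 * 2^(t-1) := by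
    rw [pow_succ, hqt]; ring
  have hDge : 2^(t-1) - 2 ≤ D := le_max_left _ _
  have hDge2 : n - 2^t - 1 ≤ D := le_max_right _ _
  have key : D + 1 = (D + 1 - (2^(t-1) - 1)) + (2^(t-1) - 1) := by omega
  rw [key, pow_add, ← g_special (t-1)]
  apply w3_pow_g_mem n (by omega)
  omega

/-- binomial coefficient `C(x+y, x)` in `ZMod 2`. -/
def Cc (x y : ℕ) : ZMod 2 := ((x+y).choose x : ZMod 2)

lemma Cc_zero_right (x : ℕ) : Cc x 0 = 1 := by simp [Cc]

lemma Cc_zero_left (y : ℕ) : Cc 0 y = 1 := by simp [Cc]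

lemma lucas_step (n k : ℕ) :
    ((n.choose k : ℕ) : ZMod 2) = (((n % 2).choose (k % 2) : ℕ) : ZMod 2) * (((n / 2).choose (k / 2) : ℕ) : ZMod 2) := by
  haveI : Fact (Nat.Prime 2) := ⟨Nat.prime_two⟩
  have h := Choose.choose_modEq_choose_mod_mul_choose_div_nat (p := 2) (n := n) (k := k)
  have h2 := (ZMod.natCast_eq_natCast_iff _ _ _).mpr h
  rw [h2]
  push_cast
  ring

lemma Cc_ee (a b : ℕ) : Cc (2*a) (2*b) = Cc a b := by
  unfold Cc
  have e : 2*a + 2*b = 2*(a+b) := by ring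
  rw [e, lucas_step]
  have h1 : (2*(a+b)) % 2 = 0 := by omega
  have h2 : (2*a) % 2 = 0 := by omega
  have h3 : (2*(a+b)) / 2 = a + b := by omega
  have h4 : (2*a) / 2 = a := by omega
  rw [h1, h2, h3, h4]
  simp

lemma Cc_oe (a b : ℕ) : Cc (2*a+1) (2*b) = Cc a b := by
  unfold Cc
  have e : 2*a+1 + 2*b = 2*(a+b)+1 := by ring
  rw [e, lucas_step]
  have h1 : (2*(a+b)+1) % 2 = 1 := by omega
  have h2 : (2*a+1) % 2 = 1 := by omega
  have h3 : (2*(a+b)+1) / 2 = a + b := by omega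
  have h4 : (2*a+1) / 2 = a := by omega
  rw [h1, h2, h3, h4]
  simp

lemma Cc_eo (a b : ℕ) : Cc (2*a) (2*b+1) = Cc a b := by
  unfold Cc
  have e : 2*a + (2*b+1) = 2*(a+b)+1 := by ring
  rw [e, lucas_step]
  have h1 : (2*(a+b)+1) % 2 = 1 := by omega
  have h2 : (2*a) % 2 = 0 := by omega
  have h3 : (2*(a+b)+1) / 2 = a + b := by omega
  have h4 : (2*a) / 2 = a := by omega
  rw [h1, h2, h3, h4]
  simp

lemma Cc_oo (a b : ℕ) : Cc (2*a+1) (2*b+1) = 0 := by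
  unfold Cc
  have e : 2*a+1 + (2*b+1) = 2*(a+b+1) := by ring
  rw [e, lucas_step]
  have h1 : (2*(a+b+1)) % 2 = 0 := by omega
  have h2 : (2*a+1) % 2 = 1 := by omega
  rw [h1, h2]
  simp

lemma Cc_one (x : ℕ) : Cc x 1 = if x % 2 = 0 then 1 else 0 := by
  unfold Cc
  rw [Nat.choose_succ_self_right]
  rcases Nat.even_or_odd' x with ⟨q, hq | hq⟩
  · subst hq
    have : (2*q) % 2 = 0 := by omega
    rw [if_pos this]
    push_cast
    have h2 : (2 : ZMod 2) = 0 := rfl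
    rw [h2]; ring
  · subst hq
    have : (2*q+1) % 2 = 1 := by omega
    rw [if_neg (by omega)]
    push_cast
    have h2 : (2 : ZMod 2) = 0 := rfl
    linear_combination ((q : ZMod 2) + 1) * h2

-- ===== the combinatorial sums =====

def T (k a B i : ℕ) : ZMod 2 :=
  if B ≤ 2^(i+1) ∧ a ≤ 3*(2^k - 2^i) then Cc (3*(2^k - 2^i) - a) (2^(i+1) - B) else 0

def fsum (k a B : ℕ) : ZMod 2 := ∑ i ∈ range (k+1), T k a B i

lemma Tee (k a' B' i : ℕ) (hik : i ≤ k) : T (k+1) (2*a') (2*B') (i+1) = T k a' B' i := by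
  have hple : (2:ℕ)^i ≤ 2^k := Nat.pow_le_pow_right (by norm_num) hik
  have p1 : (2:ℕ)^(i+1) = 2*2^i := by rw [pow_succ]; ring
  have p2 : (2:ℕ)^(i+1+1) = 2*(2*2^i) := by rw [pow_succ, p1]; ring
  have pk : (2:ℕ)^(k+1) = 2*2^k := by rw [pow_succ]; ring
  unfold T
  by_cases h : B' ≤ 2^(i+1) ∧ a' ≤ 3*(2^k - 2^i)
  · rw [if_pos h]
    rw [if_pos (by constructor <;> omega)]
    have e1 : 3*(2^(k+1) - 2^(i+1)) - 2*a' = 2*(3*(2^k - 2^i) - a') := by omega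
    have e2 : 2^(i+1+1) - 2*B' = 2*(2^(i+1) - B') := by omega
    rw [e1, e2, Cc_ee]
  · rw [if_neg h, if_neg (by omega)]

lemma Toe (k a' B' i : ℕ) (hik : i ≤ k) : T (k+1) (2*a'+1) (2*B') (i+1) = T k (a'+1) B' i := by
  have hple : (2:ℕ)^i ≤ 2^k := Nat.pow_le_pow_right (by norm_num) hik
  have p1 : (2:ℕ)^(i+1) = 2*2^i := by rw [pow_succ]; ring
  have p2 : (2:ℕ)^(i+1+1) = 2*(2*2^i) := by rw [pow_succ, p1]; ring
  have pk : (2:ℕ)^(k+1) = 2*2^k := by rw [pow_succ]; ring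
  unfold T
  by_cases h : B' ≤ 2^(i+1) ∧ a'+1 ≤ 3*(2^k - 2^i)
  · rw [if_pos h]
    rw [if_pos (by constructor <;> omega)]
    have e1 : 3*(2^(k+1) - 2^(i+1)) - (2*a'+1) = 2*(3*(2^k - 2^i) - (a'+1)) + 1 := by omega
    have e2 : 2^(i+1+1) - 2*B' = 2*(2^(i+1) - B') := by omega
    rw [e1, e2, Cc_oe]
  · rw [if_neg h, if_neg (by omega)]

lemma Teo (k a' B' i : ℕ) (hik : i ≤ k) : T (k+1) (2*a') (2*B'+1) (i+1) = T k a' (B'+1) i := by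
  have hple : (2:ℕ)^i ≤ 2^k := Nat.pow_le_pow_right (by norm_num) hik
  have p1 : (2:ℕ)^(i+1) = 2*2^i := by rw [pow_succ]; ring
  have p2 : (2:ℕ)^(i+1+1) = 2*(2*2^i) := by rw [pow_succ, p1]; ring
  have pk : (2:ℕ)^(k+1) = 2*2^k := by rw [pow_succ]; ring
  unfold T
  by_cases h : B'+1 ≤ 2^(i+1) ∧ a' ≤ 3*(2^k - 2^i)
  · rw [if_pos h]
    rw [if_pos (by constructor <;> omega)]
    have e1 : 3*(2^(k+1) - 2^(i+1)) - 2*a' = 2*(3*(2^k - 2^i) - a') := by omega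
    have e2 : 2^(i+1+1) - (2*B'+1) = 2*(2^(i+1) - (B'+1)) + 1 := by omega
    rw [e1, e2, Cc_eo]
  · rw [if_neg h, if_neg (by omega)]

lemma Too (k a' B' i : ℕ) (hik : i ≤ k) : T (k+1) (2*a'+1) (2*B'+1) (i+1) = 0 := by
  have hple : (2:ℕ)^i ≤ 2^k := Nat.pow_le_pow_right (by norm_num) hik
  have p1 : (2:ℕ)^(i+1) = 2*2^i := by rw [pow_succ]; ring
  have p2 : (2:ℕ)^(i+1+1) = 2*(2*2^i) := by rw [pow_succ, p1]; ring
  have pk : (2:ℕ)^(k+1) = 2*2^k := by rw [pow_succ]; ring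
  unfold T
  by_cases h : 2*B'+1 ≤ 2^(i+1+1) ∧ 2*a'+1 ≤ 3*(2^(k+1) - 2^(i+1))
  · rw [if_pos h]
    have e1 : 3*(2^(k+1) - 2^(i+1)) - (2*a'+1) = 2*(3*(2^k - 2^i) - (a'+1)) + 1 := by omega
    have e2 : 2^(i+1+1) - (2*B'+1) = 2*(2^(i+1) - (B'+1)) + 1 := by omega
    rw [e1, e2, Cc_oo]
  · rw [if_neg h]

lemma fsum_succ (k a B a2 B2 : ℕ) (hmap : ∀ i ≤ k, T (k+1) a B (i+1) = T k a2 B2 i) :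
    fsum (k+1) a B = T (k+1) a B 0 + fsum k a2 B2 := by
  unfold fsum
  rw [Finset.sum_range_succ' (T (k+1) a B) (k+1), add_comm]
  congr 1
  exact Finset.sum_congr rfl (fun i hi => hmap i (Nat.lt_succ_iff.mp (Finset.mem_range.mp hi)))

lemma T_first_two (k a : ℕ) (ha : a ≤ 3*(2^(k+1) - 1)) : T (k+1) a 2 0 = 1 := by
  unfold T
  rw [if_pos ⟨by norm_num, by simpa using ha⟩]
  norm_num [Cc_zero_right]

lemma T_first_one (k a : ℕ) (ha : a ≤ 3*(2^(k+1) - 1)) :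
    T (k+1) a 1 0 = if a % 2 = 1 then 1 else 0 := by
  have hk : (2:ℕ) ≤ 2^(k+1) := by
    calc (2:ℕ) = 2^1 := by norm_num
    _ ≤ 2^(k+1) := Nat.pow_le_pow_right (by norm_num) (by omega)
  unfold T
  rw [if_pos ⟨by norm_num, by simpa using ha⟩]
  have e : (2:ℕ)^(0+1) - 1 = 1 := by norm_num
  rw [e, pow_zero, Cc_one]
  have hpar : (3*(2^(k+1) - 1) - a) % 2 = (a+1) % 2 := by omega
  rw [hpar]
  by_cases h : a % 2 = 1
  · rw [if_pos (by omega), if_pos h]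
  · rw [if_neg (by omega), if_neg h]

lemma fG : ∀ k a, a ≤ 2^k - 1 → fsum k a 1 = 1 := by
  intro k
  induction k with
  | zero =>
    intro a ha
    have : a = 0 := by simpa using ha
    subst this
    unfold fsum
    rw [Finset.sum_range_one]
    unfold T
    rw [if_pos ⟨by norm_num, by norm_num⟩]
    norm_num [Cc, Nat.choose]
  | succ k ih =>
    intro a ha
    have hk : (2:ℕ)^(k+1) = 2*2^k := by rw [pow_succ]; ring
    have hk1 : (1:ℕ) ≤ 2^k := Nat.one_le_two_pow
    rcases Nat.even_or_odd' a with ⟨a', ha' | ha'⟩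
    · subst ha'
      rw [show (1:ℕ) = 2*0+1 from rfl] at *
      rw [fsum_succ (k) (2*a') (2*0+1) a' (0+1) (fun i hi => Teo k a' 0 i hi)]
      rw [T_first_one k (2*a') (by omega)]
      rw [if_neg (by omega)]
      rw [ih a' (by omega)]
      ring
    · subst ha'
      have hall : ∀ i ≤ k, T (k+1) (2*a'+1) (2*0+1) (i+1) = 0 := fun i hi => Too k a' 0 i hi
      rw [show (1:ℕ) = 2*0+1 from rfl]
      unfold fsum
      rw [Finset.sum_range_succ' (T (k+1) (2*a'+1) (2*0+1)) (k+1)]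
      have hz : ∑ i ∈ range (k+1), T (k+1) (2*a'+1) (2*0+1) (i+1) = 0 := by
        apply Finset.sum_eq_zero
        intro i hi
        exact hall i (Nat.lt_succ_iff.mp (Finset.mem_range.mp hi))
      rw [hz, zero_add]
      have := T_first_one k (2*a'+1) (by omega)
      rw [show (2*0+1 : ℕ) = 1 from rfl, this, if_pos (by omega)]

lemma fMain : ∀ k a B, 2 ≤ B → a + B ≤ 2^k → fsum k a B = 0 := by
  intro k
  induction k with
  | zero => intro a B hB hab; simp at hab; omega
  | succ k ih =>
    intro a B hB hab
    have hk : (2:ℕ)^(k+1) = 2*2^k := by rw [pow_succ]; ring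
    have hk1 : (1:ℕ) ≤ 2^k := Nat.one_le_two_pow
    rcases Nat.even_or_odd' B with ⟨B', hB' | hB'⟩
    · -- B even
      subst hB'
      rcases Nat.even_or_odd' a with ⟨a', ha' | ha'⟩ <;> subst ha'
      · -- a even
        rw [fsum_succ k (2*a') (2*B') a' B' (fun i hi => Tee k a' B' i hi)]
        by_cases hB2 : B' = 1
        · subst hB2
          rw [show (2*1 : ℕ) = 2 from rfl, T_first_two k (2*a') (by omega)]
          rw [fG k a' (by omega)]
          decide
        · have hT0 : T (k+1) (2*a') (2*B') 0 = 0 := by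
            unfold T
            rw [if_neg (by push_neg; intro h; exfalso; revert h; norm_num; omega)]
          rw [hT0, ih a' B' (by omega) (by omega), add_zero]
      · -- a odd
        rw [fsum_succ k (2*a'+1) (2*B') (a'+1) B' (fun i hi => Toe k a' B' i hi)]
        by_cases hB2 : B' = 1
        · subst hB2
          rw [show (2*1 : ℕ) = 2 from rfl, T_first_two k (2*a'+1) (by omega)]
          rw [fG k (a'+1) (by omega)]
          decide
        · have hT0 : T (k+1) (2*a'+1) (2*B') 0 = 0 := by
            unfold T
            rw [if_neg (by push_neg; intro h; exfalso; revert h; norm_num; omega)]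
          rw [hT0, ih (a'+1) B' (by omega) (by omega), add_zero]
    · -- B odd, B ≥ 3
      subst hB'
      rcases Nat.even_or_odd' a with ⟨a', ha' | ha'⟩ <;> subst ha'
      · rw [fsum_succ k (2*a') (2*B'+1) a' (B'+1) (fun i hi => Teo k a' B' i hi)]
        have hT0 : T (k+1) (2*a') (2*B'+1) 0 = 0 := by
          unfold T
          rw [if_neg (by push_neg; intro h; exfalso; revert h; norm_num; omega)]
        rw [hT0, ih a' (B'+1) (by omega) (by omega), add_zero]
      · unfold fsum
        rw [Finset.sum_range_succ' (T (k+1) (2*a'+1) (2*B'+1)) (k+1)]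
        have hz : ∑ i ∈ range (k+1), T (k+1) (2*a'+1) (2*B'+1) (i+1) = 0 := by
          apply Finset.sum_eq_zero
          intro i hi
          exact Too k a' B' i (Nat.lt_succ_iff.mp (Finset.mem_range.mp hi))
        have hT0 : T (k+1) (2*a'+1) (2*B'+1) 0 = 0 := by
          unfold T
          rw [if_neg (by push_neg; intro h; exfalso; revert h; norm_num; omega)]
        rw [hz, hT0, zero_add]
-- ===== exponent bookkeeping =====

def dd (x y : ℕ) : Fin 2 →₀ ℕ := Finsupp.single 0 x + Finsupp.single 1 y

lemma dd_apply0 (x y : ℕ) : dd x y 0 = x := by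
  simp [dd, Finsupp.single_apply]

lemma dd_apply1 (x y : ℕ) : dd x y 1 = y := by
  simp [dd, Finsupp.single_apply]

lemma Cc_zero_right' (x : ℕ) : Cc x 0 = 1 := by simp [Cc]
lemma Cc_zero_left' (y : ℕ) : Cc 0 y = 1 := by simp [Cc]

lemma eq_dd (u : Fin 2 →₀ ℕ) : u = dd (u 0) (u 1) := by
  ext i
  fin_cases i
  · simpa using (dd_apply0 (u 0) (u 1)).symm
  · simpa using (dd_apply1 (u 0) (u 1)).symm

lemma dd_inj {x y x' y' : ℕ} (h : dd x y = dd x' y') : x = x' ∧ y = y' := by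
  constructor
  · rw [← dd_apply0 x y, h, dd_apply0]
  · rw [← dd_apply1 x y, h, dd_apply1]

lemma dd_le_iff (x y x' y' : ℕ) : dd x' y' ≤ dd x y ↔ x' ≤ x ∧ y' ≤ y := by
  rw [Finsupp.le_def]
  constructor
  · intro h
    refine ⟨?_, ?_⟩
    · have := h 0; rwa [dd_apply0, dd_apply0] at this
    · have := h 1; rwa [dd_apply1, dd_apply1] at this
  · intro ⟨h1, h2⟩ i
    fin_cases i
    · simpa [dd_apply0] using h1
    · simpa [dd_apply1] using h2

lemma dd_sub (x y x' y' : ℕ) : dd x y - dd x' y' = dd (x - x') (y - y') := by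
  ext i
  fin_cases i
  · rw [Finsupp.tsub_apply]
    show dd x y 0 - dd x' y' 0 = dd (x-x') (y-y') 0
    rw [dd_apply0, dd_apply0, dd_apply0]
  · rw [Finsupp.tsub_apply]
    show dd x y 1 - dd x' y' 1 = dd (x-x') (y-y') 1
    rw [dd_apply1, dd_apply1, dd_apply1]

lemma dd_zero_iff (x y : ℕ) : dd x y = 0 ↔ x = 0 ∧ y = 0 := by
  constructor
  · intro h
    have h0 : dd x y 0 = 0 := by rw [h]; rfl
    have h1 : dd x y 1 = 0 := by rw [h]; rfl
    rw [dd_apply0] at h0; rw [dd_apply1] at h1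
    exact ⟨h0, h1⟩
  · rintro ⟨rfl, rfl⟩
    simp [dd]

lemma dd_single0 : Finsupp.single (0 : Fin 2) 1 = dd 1 0 := by simp [dd]

lemma dd_single1 (D : ℕ) : Finsupp.single (1 : Fin 2) D = dd 0 D := by simp [dd]

lemma mem_support_dd0 (x y : ℕ) : (0 : Fin 2) ∈ (dd x y).support ↔ x ≠ 0 := by
  rw [Finsupp.mem_support_iff, dd_apply0]

lemma mem_support_dd1 (x y : ℕ) : (1 : Fin 2) ∈ (dd x y).support ↔ y ≠ 0 := by
  rw [Finsupp.mem_support_iff, dd_apply1]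

lemma Cc_pascal (x y : ℕ) : Cc (x+1) (y+1) = Cc x (y+1) + Cc (x+1) y := by
  unfold Cc
  have e1 : x+1+(y+1) = (x+(y+1))+1 := by ring
  rw [e1, Nat.choose_succ_succ (x+(y+1)) x]
  have e2 : x+1+y = x+(y+1) := by ring
  rw [e2]
  push_cast
  ring

-- ===== the coefficients of g =====

lemma coeff_g : ∀ m x y, coeff (dd x y) (g m) = if 2*x + 3*y = m then Cc x y else 0 := by
  intro m
  induction m using Nat.strong_induction_on with
  | _ m ih =>
    match m with
    | 0 =>
      intro x y
      show coeff (dd x y) 1 = _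
      rw [coeff_one]
      by_cases h : x = 0 ∧ y = 0
      · obtain ⟨rfl, rfl⟩ := h
        rw [if_pos ((dd_zero_iff 0 0).mpr ⟨rfl, rfl⟩).symm, if_pos (by omega)]
        simp [Cc]
      · rw [if_neg (fun hh => h ((dd_zero_iff x y).mp hh.symm)), if_neg (by omega)]
    | 1 =>
      intro x y
      show coeff (dd x y) 0 = _
      rw [coeff_zero, if_neg (by omega)]
    | 2 =>
      intro x y
      show coeff (dd x y) (X 0) = _
      rw [coeff_X']
      by_cases h : x = 1 ∧ y = 0
      · obtain ⟨rfl, rfl⟩ := h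
        rw [if_pos (by rw [dd_single0]), if_pos (by omega)]
        simp [Cc]
      · have hne : ¬(Finsupp.single (0 : Fin 2) 1 = dd x y) := by
          rw [dd_single0]
          intro hh
          exact h ⟨(dd_inj hh).1.symm, (dd_inj hh).2.symm⟩
        rw [if_neg hne, if_neg (by omega)]
    | (r+3) =>
      intro x y
      rw [g_rec, coeff_add]
      show coeff (dd x y) (X 0 * g (r+1)) + coeff (dd x y) (X 1 * g r) = _
      rw [coeff_X_mul', coeff_X_mul', dd_single0, dd_single1, dd_sub, dd_sub]
      simp only [Nat.sub_zero]
      by_cases hx : x = 0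
      · subst hx
        rw [if_neg (by rw [mem_support_dd0]; omega)]
        by_cases hy : y = 0
        · subst hy
          rw [if_neg (by rw [mem_support_dd1]; omega), if_neg (by omega)]
          ring
        · rw [if_pos ((mem_support_dd1 0 y).mpr hy), ih r (by omega)]
          by_cases hm : 3*y = r+3
          · rw [if_pos (by omega), if_pos (by omega)]
            rw [Cc_zero_left', Cc_zero_left']
            ring
          · rw [if_neg (by omega), if_neg (by omega)]
            ring
      · by_cases hy : y = 0
        · subst hy
          rw [if_neg (show ¬((1:Fin 2) ∈ (dd x 0).support) from by rw [mem_support_dd1]; omega),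
              if_pos ((mem_support_dd0 x 0).mpr hx), ih (r+1) (by omega)]
          by_cases hm : 2*x = r+3
          · rw [if_pos (show 2*(x-1) + 3*0 = r+1 by omega), if_pos (show 2*x+3*0 = r+3 by omega),
                Cc_zero_right', Cc_zero_right']
            ring
          · rw [if_neg (show ¬(2*(x-1) + 3*0 = r+1) by omega), if_neg (show ¬(2*x+3*0 = r+3) by omega)]
            ring
        · rw [if_pos ((mem_support_dd0 x y).mpr hx), if_pos ((mem_support_dd1 x y).mpr hy),
              ih (r+1) (by omega), ih r (by omega)]
          by_cases hm : 2*x + 3*y = r+3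
          · rw [if_pos (show 2*(x-1) + 3*y = r+1 by omega), if_pos (show 2*x + 3*(y-1) = r by omega),
                if_pos (show 2*x + 3*y = r+3 by omega)]
            obtain ⟨x', rfl⟩ : ∃ x', x = x'+1 := ⟨x-1, by omega⟩
            obtain ⟨y', rfl⟩ : ∃ y', y = y'+1 := ⟨y-1, by omega⟩
            show Cc (x'+1-1) (y'+1) + Cc (x'+1) (y'+1-1) = Cc (x'+1) (y'+1)
            rw [Nat.add_sub_cancel, Nat.add_sub_cancel, Cc_pascal]
          · rw [if_neg (show ¬(2*(x-1) + 3*y = r+1) by omega), if_neg (show ¬(2*x + 3*(y-1) = r) by omega),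
                if_neg (show ¬(2*x + 3*y = r+3) by omega)]
            ring

-- ===== the linear functional =====

def phi (k D : ℕ) (p : R2) : ZMod 2 :=
  ∑ i ∈ range (k+1), if 2*(2^k - 2^i) ≤ D then coeff (dd (3*(2^k - 2^i)) (D - 2*(2^k - 2^i))) p else 0

lemma phi_add (k D : ℕ) (p q : R2) : phi k D (p + q) = phi k D p + phi k D q := by
  unfold phi
  rw [← Finset.sum_add_distrib]
  apply Finset.sum_congr rfl
  intro i _
  split_ifs with h
  · rw [coeff_add]
  · rw [add_zero]

lemma phi_zero (k D : ℕ) : phi k D 0 = 0 := by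
  unfold phi
  apply Finset.sum_eq_zero
  intro i _
  split_ifs <;> simp

lemma phi_monomial_g (k D m : ℕ) (hk : 1 ≤ k) (hD2 : D ≤ 2*2^k - 2) (hm : 2*2^k + D - 1 ≤ m)
    (u : Fin 2 →₀ ℕ) (c : ZMod 2) : phi k D (monomial u c * g m) = 0 := by
  have hu : u = dd (u 0) (u 1) := eq_dd u
  set a0 := u 0 with ha0
  set b0 := u 1 with hb0
  have hterm : ∀ i, (coeff (dd (3*(2^k - 2^i)) (D - 2*(2^k - 2^i))) (monomial u c * g m))
      = if a0 ≤ 3*(2^k - 2^i) ∧ b0 ≤ D - 2*(2^k - 2^i) then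
          c * (if 2*(3*(2^k - 2^i) - a0) + 3*((D - 2*(2^k - 2^i)) - b0) = m
               then Cc (3*(2^k - 2^i) - a0) ((D - 2*(2^k - 2^i)) - b0) else 0)
        else 0 := by
    intro i
    rw [hu, coeff_monomial_mul', dd_sub, coeff_g]
    by_cases h : a0 ≤ 3*(2^k - 2^i) ∧ b0 ≤ D - 2*(2^k - 2^i)
    · rw [if_pos ((dd_le_iff _ _ _ _).mpr h), if_pos h]
    · rw [if_neg (fun hh => h ((dd_le_iff _ _ _ _).mp hh)), if_neg h]
  have hkpow : (1:ℕ) ≤ 2^k := Nat.one_le_two_pow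
  by_cases h3D : 2*a0 + 3*b0 + m = 3*D
  · -- the interesting case
    set B := b0 + (2*2^k - D) with hB
    unfold phi
    have heq : ∀ i ∈ range (k+1),
        (if 2*(2^k - 2^i) ≤ D then coeff (dd (3*(2^k - 2^i)) (D - 2*(2^k - 2^i))) (monomial u c * g m) else 0)
        = c * T k a0 B i := by
      intro i hi
      have hik : i ≤ k := Nat.lt_succ_iff.mp (Finset.mem_range.mp hi)
      have hple : (2:ℕ)^i ≤ 2^k := Nat.pow_le_pow_right (by norm_num) hik
      have p1 : (2:ℕ)^(i+1) = 2*2^i := by rw [pow_succ]; ring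
      rw [hterm i]
      unfold T
      by_cases hg : B ≤ 2^(i+1) ∧ a0 ≤ 3*(2^k - 2^i)
      · rw [if_pos (show 2*(2^k - 2^i) ≤ D by omega), if_pos (by constructor <;> omega),
            if_pos (by omega), if_pos hg,
            show (D - 2*(2^k - 2^i)) - b0 = 2^(i+1) - B by omega]
      · rw [if_neg hg]
        by_cases h1 : 2*(2^k - 2^i) ≤ D
        · rw [if_pos h1, if_neg (by omega)]
          ring
        · rw [if_neg h1]
          ring
    rw [Finset.sum_congr rfl heq, ← Finset.mul_sum]
    have hf : ∑ i ∈ range (k+1), T k a0 B i = fsum k a0 B := rfl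
    rw [hf, fMain k a0 B (by omega) (by omega)]
    ring
  · -- degree mismatch: every term vanishes
    unfold phi
    apply Finset.sum_eq_zero
    intro i hi
    have hik : i ≤ k := Nat.lt_succ_iff.mp (Finset.mem_range.mp hi)
    have hple : (2:ℕ)^i ≤ 2^k := Nat.pow_le_pow_right (by norm_num) hik
    rw [hterm i]
    by_cases h1 : 2*(2^k - 2^i) ≤ D
    · rw [if_pos h1]
      by_cases h2 : a0 ≤ 3*(2^k - 2^i) ∧ b0 ≤ D - 2*(2^k - 2^i)
      · rw [if_pos h2, if_neg (by omega)]
        ring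
      · rw [if_neg h2]
    · rw [if_neg h1]

lemma phi_g_mul (k D m : ℕ) (hk : 1 ≤ k) (hD2 : D ≤ 2*2^k - 2) (hm : 2*2^k + D - 1 ≤ m)
    (r : R2) : phi k D (r * g m) = 0 := by
  induction r using MvPolynomial.induction_on' with
  | monomial u a => exact phi_monomial_g k D m hk hD2 hm u a
  | add p q hp hq => rw [add_mul, phi_add, hp, hq, add_zero]

lemma phi_w3_pow (k D : ℕ) : phi k D (w3 ^ D) = 1 := by
  unfold phi
  have heq : ∀ i ∈ range (k+1),
      (if 2*(2^k - 2^i) ≤ D then coeff (dd (3*(2^k - 2^i)) (D - 2*(2^k - 2^i))) (w3 ^ D) else 0)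
      = if i = k then 1 else 0 := by
    intro i hi
    have hik : i ≤ k := Nat.lt_succ_iff.mp (Finset.mem_range.mp hi)
    have hple : (2:ℕ)^i ≤ 2^k := Nat.pow_le_pow_right (by norm_num) hik
    show (if 2*(2^k - 2^i) ≤ D then coeff (dd (3*(2^k - 2^i)) (D - 2*(2^k - 2^i))) (X 1 ^ D) else 0) = _
    by_cases h : i = k
    · subst h
      rw [if_pos (by simp), if_pos rfl]
      rw [Nat.sub_self]
      norm_num
      rw [coeff_X_pow, if_pos (dd_single1 D)]
    · have hlt : (2:ℕ)^i < 2^k := Nat.pow_lt_pow_right (by norm_num) (by omega)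
      rw [if_neg h]
      by_cases h1 : 2*(2^k - 2^i) ≤ D
      · rw [if_pos h1, coeff_X_pow, if_neg]
        intro hh
        rw [dd_single1] at hh
        have := dd_inj hh
        omega
      · rw [if_neg h1]
  rw [Finset.sum_congr rfl heq, Finset.sum_ite_eq' (range (k+1)) k (fun _ => 1),
      if_pos (Finset.mem_range.mpr (by omega))]

lemma not_mem_w3_pow (n k D : ℕ) (hk : 1 ≤ k) (hD2 : D ≤ 2*2^k - 2)
    (hn2 : 2*2^k + D - 1 ≤ n - 2) (hn : 2 ≤ n) : w3 ^ D ∉ I n := by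
  intro hmem
  have h0 : ∀ r : R2, phi k D (r * w3 ^ D) = 0 := by
    refine Submodule.span_induction (p := fun x _ => ∀ r : R2, phi k D (r * x) = 0)
      ?_ ?_ ?_ ?_ hmem
    · rintro x hx
      simp only [Set.mem_insert_iff, Set.mem_singleton_iff] at hx
      rcases hx with rfl | rfl | rfl
      · exact fun r => phi_g_mul k D (n-2) hk hD2 (by omega) r
      · exact fun r => phi_g_mul k D (n-1) hk hD2 (by omega) r
      · exact fun r => phi_g_mul k D n hk hD2 (by omega) r
    · intro r
      rw [mul_zero, phi_zero]
    · intro x y hx hy ihx ihy r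
      rw [mul_add, phi_add, ihx, ihy, add_zero]
    · intro a x hx ihx r
      rw [smul_eq_mul, ← mul_assoc]
      exact ihx (r * a)
  have h1 := h0 1
  rw [one_mul, phi_w3_pow] at h1
  exact one_ne_zero h1

/-- Theorem 1.3 (height of `w̃₃`): for `2^t - 1 ≤ n < 2^{t+1} - 1` and
`d = max{2^{t-1} - 2, n - 2^t - 1}`, we have `w₃^d ∉ I_n` and `w₃^{d+1} ∈ I_n`. -/
theorem height_w3 (n t : ℕ) (hn : 7 ≤ n) (ht : 3 ≤ t)
    (h1 : 2 ^ t - 1 ≤ n) (h2 : n < 2 ^ (t + 1) - 1) :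
    w3 ^ (max (2 ^ (t - 1) - 2) (n - 2 ^ t - 1)) ∉ I n ∧
    w3 ^ (max (2 ^ (t - 1) - 2) (n - 2 ^ t - 1) + 1) ∈ I n := by
  constructor
  · set D := max (2 ^ (t - 1) - 2) (n - 2 ^ t - 1) with hDdef
    have hq : (2:ℕ)^(t-2) ≥ 2 := by
      calc (2:ℕ)^(t-2) ≥ 2^1 := Nat.pow_le_pow_right (by norm_num) (by omega)
      _ = 2 := by norm_num
    have e1 : (2:ℕ)^(t-1) = 2*2^(t-2) := by
      rw [← pow_succ']; congr 1; omega
    have e2 : (2:ℕ)^t = 2*(2*2^(t-2)) := by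
      rw [← e1, ← pow_succ']; congr 1; omega
    have e3 : (2:ℕ)^(t+1) = 2*(2*(2*2^(t-2))) := by
      rw [← e2, ← pow_succ']
    by_cases hcase : n ≤ 2^t + 2^(t-1) - 1
    · have hD : D = 2^(t-1) - 2 := max_eq_left (by omega)
      exact not_mem_w3_pow n (t-2) D (by omega) (by omega) (by omega) (by omega)
    · have hD : D = n - 2^t - 1 := max_eq_right (by omega)
      have e1' : (2:ℕ)^(t-1) = 2*2^(t-1-1) := by
        rw [← pow_succ']; congr 1; omega
      exact not_mem_w3_pow n (t-1) D (by omega) (by omega) (by omega) (by omega)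
  · exact membership n t hn ht h1 h2

end
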